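/- Let d ≥ 3 be an integer and let t > 2. Then ∫₁^{t−1} |t−s|^{−d/2} s^{−d/2} t^{d/2} ds ≤ 2^{2+d/2}/(d−2). -/

import Mathlib

/-!
Since `t / (s (t - s)) = 1 / s + 1 / (t - s)`, the integrand is `(1/s + 1/(t-s))^(d/2)`, which by
convexity is at most `2^(d/2 - 1) (s^(-d/2) + (t-s)^(-d/2))`. The two terms have the same integral
by the symmetry `s ↦ t - s`, and each is at most `∫₁^∞ s^(-d/2) ds = 2 / (d - 2)`.
-/

open intervalIntegral Real

lemma Real.rpow_add_le_mul_rpow_add_rpow {a b p : ℝ} (ha : 0 ≤ a) (hb : 0 ≤ b)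
    (hp : 1 ≤ p) :
    (a + b) ^ p ≤ 2 ^ (p - 1) * (a ^ p + b ^ p) := by
  lift a to NNReal using ha
  lift b to NNReal using hb
  exact_mod_cast NNReal.rpow_add_le_mul_rpow_add_rpow a b hp

lemma integral_one_rpow_neg_le {p a : ℝ} (hp : 1 < p) (ha : 0 < a) :
    ∫ s in (1 : ℝ)..a, s ^ (-p) ≤ 1 / (p - 1) := by
  have h0 : (0 : ℝ) ∉ Set.uIcc 1 a := fun h ↦ by
    rcases Set.mem_uIcc.1 h with h | h <;> linarith [h.1, h.2]
  rw [integral_rpow (Or.inr ⟨by linarith, h0⟩), one_rpow, ← neg_div_neg_eq, neg_sub, neg_add',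
    neg_neg]
  gcongr
  exact sub_le_self _ (rpow_nonneg ha.le _)

lemma abs_sub_rpow_neg_mul_rpow_neg_mul_rpow {s t : ℝ} (p : ℝ) (hs : 0 < s) (hst : s < t) :
    |t - s| ^ (-p) * s ^ (-p) * t ^ p = (s⁻¹ + (t - s)⁻¹) ^ p := by
  have hts : 0 < t - s := sub_pos.2 hst
  have ht0 : 0 < t := hs.trans hst
  rw [abs_of_pos hts, show s⁻¹ + (t - s)⁻¹ = (t - s)⁻¹ * s⁻¹ * t by field_simp; ring,
    mul_rpow (by positivity) ht0.le, mul_rpow (inv_pos.2 hts).le (inv_pos.2 hs).le,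
    inv_rpow hts.le, inv_rpow hs.le, rpow_neg hts.le, rpow_neg hs.le]

lemma integral_inv_add_inv_rpow_le {p t : ℝ} (hp : 1 < p) (ht : 2 ≤ t) :
    ∫ s in (1 : ℝ)..t - 1, (s⁻¹ + (t - s)⁻¹) ^ p ≤ 2 ^ p / (p - 1) := by
  have hmem : ∀ s ∈ Set.uIcc 1 (t - 1), 1 ≤ s ∧ 1 ≤ t - s := fun s hs ↦ by
    rw [Set.uIcc_of_le (by linarith)] at hs
    exact ⟨hs.1, by linarith [hs.2]⟩
  have h0 : (0 : ℝ) ∉ Set.uIcc 1 (t - 1) := fun h ↦ by linarith [(hmem 0 h).1]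
  have hint : IntervalIntegrable (fun s ↦ s ^ (-p)) MeasureTheory.volume 1 (t - 1) :=
    intervalIntegrable_rpow (Or.inr h0)
  have hint' : IntervalIntegrable (fun s ↦ (t - s) ^ (-p)) MeasureTheory.volume 1 (t - 1) := by
    simpa using (hint.comp_sub_left t).symm
  have hint_sum :
      IntervalIntegrable (fun s ↦ (s⁻¹ + (t - s)⁻¹) ^ p) MeasureTheory.volume 1 (t - 1) := by
    refine ContinuousOn.intervalIntegrable fun s hs ↦ ?_
    obtain ⟨hs1, hts1⟩ := hmem s hs
    have : ContinuousAt (fun s ↦ s⁻¹ + (t - s)⁻¹) s := by fun_prop (disch := grind)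
    exact (this.rpow_const (Or.inr (by linarith))).continuousWithinAt
  calc ∫ s in (1 : ℝ)..t - 1, (s⁻¹ + (t - s)⁻¹) ^ p
      ≤ ∫ s in (1 : ℝ)..t - 1, 2 ^ (p - 1) * (s ^ (-p) + (t - s) ^ (-p)) := by
        refine integral_mono_on (by linarith) hint_sum ((hint.add hint').const_mul _)
          fun s hs ↦ ?_
        obtain ⟨hs1, hts1⟩ := hmem s (Set.uIcc_of_le (by linarith : (1:ℝ) ≤ t - 1) ▸ hs)
        rw [rpow_neg (by linarith), rpow_neg (by linarith), ← inv_rpow (by linarith),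
          ← inv_rpow (by linarith)]
        exact rpow_add_le_mul_rpow_add_rpow (by positivity) (by positivity) hp.le
    _ = 2 ^ (p - 1) * (2 * ∫ s in (1 : ℝ)..t - 1, s ^ (-p)) := by
        rw [integral_const_mul, integral_add hint hint',
          integral_comp_sub_left (fun s ↦ s ^ (-p)), sub_sub_cancel]
        ring
    _ ≤ 2 ^ (p - 1) * (2 * (1 / (p - 1))) := by
        gcongr
        exact integral_one_rpow_neg_le hp (by linarith)
    _ = 2 ^ p / (p - 1) := by
        rw [rpow_sub_one two_ne_zero]
        field_simp

theorem stmt_4 (d : ℕ) (hd : 3 ≤ d) (t : ℝ) (ht : 2 < t) :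
    (∫ s in (1:ℝ)..(t - 1),
        |t - s| ^ (-((d : ℝ) / 2)) * s ^ (-((d : ℝ) / 2)) * t ^ ((d : ℝ) / 2))
      ≤ 2 ^ (2 + (d : ℝ) / 2) / ((d : ℝ) - 2) := by
  have hp : 1 < (d : ℝ) / 2 := by
    have : (3 : ℝ) ≤ d := by exact_mod_cast hd
    linarith
  calc _ = ∫ s in (1:ℝ)..(t - 1), (s⁻¹ + (t - s)⁻¹) ^ ((d : ℝ) / 2) := by
        refine integral_congr fun s hs ↦ ?_
        rw [Set.uIcc_of_le (by linarith)] at hs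
        exact abs_sub_rpow_neg_mul_rpow_neg_mul_rpow _ (by linarith [hs.1]) (by linarith [hs.2])
    _ ≤ 2 ^ ((d : ℝ) / 2) / ((d : ℝ) / 2 - 1) := integral_inv_add_inv_rpow_le hp ht.le
    _ ≤ 2 ^ (2 + (d : ℝ) / 2) / ((d : ℝ) - 2) := by
        rw [rpow_add two_pos, show (d : ℝ) / 2 - 1 = ((d : ℝ) - 2) / 2 by ring,
          div_div_eq_mul_div]
        have h2p : 0 < (2 : ℝ) ^ ((d : ℝ) / 2) := by positivity
        have h4 : (2 : ℝ) ^ (2 : ℝ) = 4 := by norm_num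
        gcongr ?_ / _
        · linarith
        · linarith
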